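/- arXiv:0710.4375 — 3 statements merged into one kernel-verified Lean document; each statement's English description precedes it below -/
import Mathlib

section
/- Let Δ ⊂ ℝ^n (n ≥ 1) be the convex hull of a finite subset of ℤ^n with nonempty interior, φ_Δ(v) = log(Σ_{α ∈ Δ∩ℤ^n} e^{⟨α,v⟩}), χ : ℝ^n → ℝ smooth with compact support, and φ = φ_Δ + χ. Then the convex envelope φ_e of φ is real-valued and convex on ℝ^n, it is differentiable at every point of ℝ^n, and its gradient map ∇φ_e : ℝ^n → ℝ^n is Lipschitz continuous on ℝ^n. (This is the toric-model instance of the theorem that for a smooth metric on a big line bundle the equilibrium metric is of class C^{1,1} away from the augmented base locus.) -/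
open scoped RealInnerProductSpace
open MeasureTheory Filter

/-- The convex envelope of a function `φ : ℝⁿ → ℝ`: the pointwise supremum of all
convex minorants of `φ`. -/
noncomputable def convEnv {n : ℕ} (φ : EuclideanSpace ℝ (Fin n) → ℝ)
    (v : EuclideanSpace ℝ (Fin n)) : ℝ :=
  sSup {y : ℝ | ∃ g : EuclideanSpace ℝ (Fin n) → ℝ,
    ConvexOn ℝ Set.univ g ∧ (∀ w, g w ≤ φ w) ∧ y = g v}


section Midpoint
variable {E : Type*} [NormedAddCommGroup E] [NormedSpace ℝ E]

theorem convexOn_of_midpoint' {ψ : E → ℝ} (hc : Continuous ψ)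
    (hm : ∀ x y : E, ψ ((1/2 : ℝ) • x + (1/2 : ℝ) • y) ≤ ψ x / 2 + ψ y / 2) :
    ConvexOn ℝ Set.univ ψ := by
  refine ⟨convex_univ, ?_⟩
  intro x _ y _ a b ha hb hab
  set e := y - x with he
  set g : ℝ → ℝ := fun t => ψ (x + t • e) with hg
  have hgc : Continuous g := hc.comp (by continuity)
  set h : ℝ → ℝ := fun t => g t - ((1 - t) * g 0 + t * g 1) with hh
  have hhc : Continuous h := by
    apply hgc.sub
    continuity
  have hgm : ∀ u v : ℝ, g ((u + v) / 2) ≤ g u / 2 + g v / 2 := by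
    intro u v
    have hx : x + ((u + v)/2) • e = (1/2 : ℝ) • (x + u • e) + (1/2 : ℝ) • (x + v • e) := by
      module
    rw [hg]; simp only; rw [hx]
    exact hm _ _
  have hhm : ∀ u v : ℝ, h ((u + v) / 2) ≤ h u / 2 + h v / 2 := by
    intro u v
    simp only [hh]
    have := hgm u v
    ring_nf
    ring_nf at this
    linarith
  have h0 : h 0 = 0 := by simp [hh]
  have h1 : h 1 = 0 := by simp [hh]
  clear_value h
  -- max principle on [0,1]
  have key : ∀ t ∈ Set.Icc (0:ℝ) 1, h t ≤ 0 := by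
    by_contra hcon
    push_neg at hcon
    obtain ⟨t₀, ht₀I, ht₀⟩ := hcon
    obtain ⟨tm, htmI, htm⟩ := isCompact_Icc.exists_isMaxOn (Set.nonempty_Icc.2 zero_le_one)
      hhc.continuousOn
    have hM : 0 < h tm := lt_of_lt_of_le ht₀ (htm ht₀I)
    set K : Set ℝ := {t | t ∈ Set.Icc (0:ℝ) 1 ∧ h t = h tm} with hK
    have hKc : IsCompact K := by
      have hKeq : K = Set.Icc (0:ℝ) 1 ∩ h ⁻¹' {h tm} := rfl
      rw [hKeq]
      exact isCompact_Icc.inter_right (isClosed_singleton.preimage hhc)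
    have hKne : K.Nonempty := ⟨tm, htmI, rfl⟩
    set t₁ := sSup K with ht₁
    have ht₁K : t₁ ∈ K := hKc.sSup_mem hKne
    obtain ⟨ht₁I, ht₁M⟩ := ht₁K
    have ht₁0 : t₁ ≠ 0 := by intro hz; rw [hz, h0] at ht₁M; linarith
    have ht₁1 : t₁ ≠ 1 := by intro hz; rw [hz, h1] at ht₁M; linarith
    have h01a : 0 < t₁ := lt_of_le_of_ne ht₁I.1 (Ne.symm ht₁0)
    have h01b : t₁ < 1 := lt_of_le_of_ne ht₁I.2 ht₁1
    set δ := min t₁ (1 - t₁) with hδ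
    have hδ0 : 0 < δ := lt_min h01a (by linarith)
    have hδt : δ ≤ t₁ := min_le_left _ _
    have hδt' : δ ≤ 1 - t₁ := min_le_right _ _
    have huI : t₁ - δ ∈ Set.Icc (0:ℝ) 1 := ⟨by linarith, by linarith [ht₁I.2]⟩
    have hvI : t₁ + δ ∈ Set.Icc (0:ℝ) 1 := ⟨by linarith [ht₁I.1], by linarith⟩
    have hmid : ((t₁ - δ) + (t₁ + δ)) / 2 = t₁ := by ring
    have hineq := hhm (t₁ - δ) (t₁ + δ)
    rw [hmid, ht₁M] at hineq
    have hu : h (t₁ - δ) ≤ h tm := htm huI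
    have hv : h (t₁ + δ) ≤ h tm := htm hvI
    have hu' : h (t₁ - δ) ≤ h tm := hu
    have hv' : h (t₁ + δ) ≤ h tm := hv
    have hineq' : h tm ≤ h (t₁ - δ) / 2 + h (t₁ + δ) / 2 := hineq
    have hveq : h (t₁ + δ) = h tm := by linarith
    have hvK : t₁ + δ ∈ K := ⟨hvI, hveq⟩
    have hbdd : BddAbove K := hKc.bddAbove
    have hle : t₁ + δ ≤ t₁ := le_csSup hbdd hvK
    linarith
  -- conclude
  have hb1 : b ∈ Set.Icc (0:ℝ) 1 := ⟨hb, by linarith⟩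
  have hpt : a • x + b • y = x + b • e := by
    rw [he]; have hba : a = 1 - b := by linarith
    rw [hba]; module
  have hkb := key b hb1
  have hgb : g b ≤ (1 - b) * g 0 + b * g 1 := by
    simp only [hh] at hkb; linarith
  have hg0 : g 0 = ψ x := by simp [hg]
  have hg1 : g 1 = ψ y := by simp [hg, he]
  rw [hpt]
  calc ψ (x + b • e) = g b := rfl
    _ ≤ (1 - b) * g 0 + b * g 1 := hgb
    _ = a * ψ x + b * ψ y := by
        have hba : a = 1 - b := by linarith
        rw [hg0, hg1, hba]
    _ = a • ψ x + b • ψ y := by simp [smul_eq_mul]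

end Midpoint

section Subgrad
variable {E : Type*} [NormedAddCommGroup E] [NormedSpace ℝ E]

theorem exists_subgradient' {u : E → ℝ} (hconv : ConvexOn ℝ Set.univ u)
    (hc : Continuous u) (x : E) :
    ∃ ℓ : E →L[ℝ] ℝ, ∀ y, u x + ℓ (y - x) ≤ u y := by
  set s : Set (E × ℝ) := {p : E × ℝ | u p.1 < p.2} with hs
  have hopen : IsOpen s := isOpen_lt (hc.comp continuous_fst) continuous_snd
  have hconvs : Convex ℝ s := by
    intro p hp q hq a b ha hb hab
    simp only [hs, Set.mem_setOf_eq] at hp hq ⊢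
    have h1 : u (a • p.1 + b • q.1) ≤ a * u p.1 + b * u q.1 := by
      have := hconv.2 (Set.mem_univ p.1) (Set.mem_univ q.1) ha hb hab
      simpa [smul_eq_mul] using this
    have h2 : a * u p.1 + b * u q.1 < a * p.2 + b * q.2 := by
      rcases eq_or_lt_of_le ha with rfl | ha'
      · have hb1 : b = 1 := by linarith
        simp only [zero_mul, zero_add, hb1, one_mul]
        linarith
      · have : a * u p.1 < a * p.2 := by exact (mul_lt_mul_iff_right₀ ha').2 hp
        have : b * u q.1 ≤ b * q.2 := mul_le_mul_of_nonneg_left (le_of_lt hq) hb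
        nlinarith [(mul_lt_mul_iff_right₀ ha').2 hp]
    have : (a • p + b • q).1 = a • p.1 + b • q.1 := rfl
    have h2' : (a • p + b • q).2 = a * p.2 + b * q.2 := rfl
    rw [this, h2']
    exact lt_of_le_of_lt h1 h2
  have hx : (x, u x) ∉ s := by simp [hs]
  obtain ⟨F, hF⟩ := geometric_hahn_banach_open_point hconvs hopen hx
  set β : ℝ := F (0, 1) with hβdef
  set ℓ₁ : E →L[ℝ] ℝ := F.comp (ContinuousLinearMap.inl ℝ E ℝ) with hℓ₁
  have hFsplit : ∀ (y : E) (t : ℝ), F (y, t) = ℓ₁ y + t * β := by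
    intro y t
    have : (y, t) = (y, (0:ℝ)) + t • ((0:E), (1:ℝ)) := by
      simp [Prod.ext_iff]
    rw [this, map_add, _root_.map_smul]
    simp [hℓ₁, hβdef, smul_eq_mul, ContinuousLinearMap.comp_apply]
  have hβneg : β < 0 := by
    have hmem : ((x, u x + 1) : E × ℝ) ∈ s := by simp [hs]
    have := hF _ hmem
    rw [hFsplit x (u x + 1), hFsplit x (u x)] at this
    nlinarith
  have hkey : ∀ y : E, ℓ₁ y + β * u y ≤ ℓ₁ x + β * u x := by
    intro y
    refine le_of_forall_pos_le_add ?_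
    intro ε hε
    have hmem : ((y, u y + ε / (-β)) : E × ℝ) ∈ s := by
      simp only [hs, Set.mem_setOf_eq]
      have : 0 < ε / (-β) := div_pos hε (by linarith)
      linarith
    have := hF _ hmem
    rw [hFsplit y _, hFsplit x _] at this
    have hβne : β ≠ 0 := by linarith
    have hb' : (ε / (-β)) * β = -ε := by
      rw [div_mul_eq_mul_div, div_neg, mul_div_assoc, div_self hβne, mul_one]
    nlinarith [this]
  refine ⟨(-β)⁻¹ • ℓ₁, fun y => ?_⟩
  have h := hkey y
  have hβ' : 0 < -β := by linarith
  rw [ContinuousLinearMap.smul_apply, map_sub, smul_eq_mul]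
  have h2 : (-β)⁻¹ * (ℓ₁ y - ℓ₁ x) ≤ u y - u x := by
    rw [inv_mul_le_iff₀ hβ']
    nlinarith [hkey y]
  linarith
end Subgrad

section C11
variable {E : Type*} [NormedAddCommGroup E] [InnerProductSpace ℝ E] [CompleteSpace E]

theorem c11_of_convex_semiconcave {f : E → ℝ} {L : ℝ} (hL : 0 < L)
    (hf : ConvexOn ℝ Set.univ f) (hfc : Continuous f)
    (hψ : ConvexOn ℝ Set.univ (fun x => L / 2 * ‖x‖ ^ 2 - f x)) :
    ∃ P : E → E, (∀ x, HasGradientAt f (P x) x) ∧ LipschitzWith L.toNNReal P := by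
  set ψ : E → ℝ := fun x => L / 2 * ‖x‖ ^ 2 - f x with hψdef
  have hψc : Continuous ψ := by
    apply Continuous.sub _ hfc
    continuity
  choose ℓf hℓf using fun x => exists_subgradient' hf hfc x
  choose ℓψ hℓψ using fun x => exists_subgradient' hψ hψc x
  -- upper quadratic bound via ψ-subgradient
  have hub : ∀ x h : E, f (x + h) ≤ f x + (L * ⟪x, h⟫ - ℓψ x h) + L / 2 * ‖h‖ ^ 2 := by
    intro x h
    have h1 := hℓψ x (x + h)
    have h2 : (x + h) - x = h := by abel
    rw [h2] at h1
    have h3 : ‖x + h‖ ^ 2 = ‖x‖ ^ 2 + 2 * ⟪x, h⟫ + ‖h‖ ^ 2 := by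
      rw [← real_inner_self_eq_norm_sq, ← real_inner_self_eq_norm_sq,
        ← real_inner_self_eq_norm_sq]
      rw [inner_add_add_self]
      rw [real_inner_comm h x]
      ring
    simp only [hψdef] at h1
    rw [h3] at h1
    linarith
  have hlb : ∀ x h : E, f x + ℓf x h ≤ f (x + h) := by
    intro x h
    have h1 := hℓf x (x + h)
    have h2 : (x + h) - x = h := by abel
    rwa [h2] at h1
  -- identification of the subgradient of f
  have heq : ∀ x h : E, ℓf x h = L * ⟪x, h⟫ - ℓψ x h := by
    intro x h
    have key : ∀ k : E, ℓf x k ≤ (L * ⟪x, k⟫ - ℓψ x k) + L / 2 * ‖k‖ ^ 2 := by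
      intro k
      have := hlb x k
      have := hub x k
      linarith
    have half : ∀ k : E, ℓf x k - (L * ⟪x, k⟫ - ℓψ x k) ≤ 0 := by
      intro k
      by_contra hcon
      push_neg at hcon
      set a := ℓf x k - (L * ⟪x, k⟫ - ℓψ x k) with ha
      set t : ℝ := a / (L * ‖k‖ ^ 2 + 1) with ht
      have hden : 0 < L * ‖k‖ ^ 2 + 1 := by positivity
      have ht0 : 0 < t := div_pos hcon hden
      have := key (t • k)
      rw [_root_.map_smul, _root_.map_smul, real_inner_smul_right, norm_smul] at this
      simp only [smul_eq_mul, Real.norm_eq_abs] at this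
      rw [mul_pow, sq_abs] at this
      have h5 : t * a ≤ L / 2 * (t ^ 2 * ‖k‖ ^ 2) := by nlinarith [this]
      have h5' : t * a ≤ t * (L / 2 * (t * ‖k‖ ^ 2)) := by
        calc t * a ≤ L / 2 * (t ^ 2 * ‖k‖ ^ 2) := h5
          _ = t * (L / 2 * (t * ‖k‖ ^ 2)) := by ring
      have h6 : a ≤ L / 2 * (t * ‖k‖ ^ 2) := (mul_le_mul_iff_right₀ ht0).mp h5'
      have h7 : L / 2 * (t * ‖k‖ ^ 2) < a := by
        have hrw : L / 2 * (a / (L * ‖k‖ ^ 2 + 1) * ‖k‖ ^ 2)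
            = a * (L * ‖k‖ ^ 2) / (2 * (L * ‖k‖ ^ 2 + 1)) := by
          field_simp
        rw [ht, hrw, div_lt_iff₀ (by positivity)]
        nlinarith [hcon, sq_nonneg ‖k‖]
      linarith
    have h1 := half h
    have h2 := half (-h)
    rw [map_neg, map_neg, inner_neg_right] at h2
    linarith
  set P : E → E := fun x => (InnerProductSpace.toDual ℝ E).symm (ℓf x) with hP
  have hPinner : ∀ x h : E, ⟪P x, h⟫ = ℓf x h := by
    intro x h
    simp [hP, InnerProductSpace.toDual_symm_apply]
  have hgrad : ∀ x, HasGradientAt f (P x) x := by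
    intro x
    rw [hasGradientAt_iff_hasFDerivAt]
    have htd : InnerProductSpace.toDual ℝ E (P x) = ℓf x :=
      (InnerProductSpace.toDual ℝ E).apply_symm_apply _
    rw [htd]
    rw [hasFDerivAt_iff_isLittleO_nhds_zero]
    rw [Asymptotics.isLittleO_iff]
    intro c hc
    rw [Metric.eventually_nhds_iff]
    refine ⟨2 * c / L, by positivity, ?_⟩
    intro h hh
    simp only [dist_zero_right] at hh
    have hbd1 : 0 ≤ f (x + h) - f x - ℓf x h := by linarith [hlb x h]
    have hbd2 : f (x + h) - f x - ℓf x h ≤ L / 2 * ‖h‖ ^ 2 := by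
      have := hub x h
      rw [heq x h]
      linarith
    rw [Real.norm_eq_abs, abs_of_nonneg hbd1]
    calc f (x + h) - f x - ℓf x h ≤ L / 2 * ‖h‖ ^ 2 := hbd2
      _ = L / 2 * ‖h‖ * ‖h‖ := by ring
      _ ≤ L / 2 * (2 * c / L) * ‖h‖ := by
          apply mul_le_mul_of_nonneg_right _ (norm_nonneg h)
          apply mul_le_mul_of_nonneg_left hh.le (by positivity)
      _ = c * ‖h‖ := by field_simp
  -- cocoercivity
  have coco : ∀ a b : E,
      f a + ⟪P a, b - a⟫ + 1 / (2 * L) * ‖P b - P a‖ ^ 2 ≤ f b := by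
    intro a b
    set u := P b - P a with hu
    set z := b - L⁻¹ • u with hz
    have h1 : f a + ℓf a (z - a) ≤ f z := by
      have := hlb a (z - a)
      rwa [add_sub_cancel] at this
    have h2 : f z ≤ f b + ⟪P b, z - b⟫ + L / 2 * ‖z - b‖ ^ 2 := by
      have := hub b (z - b)
      rw [add_sub_cancel] at this
      rw [← heq b (z - b)] at this
      rw [hPinner]
      linarith
    have hzb : z - b = -(L⁻¹ • u) := by rw [hz]; abel
    have hza : z - a = (b - a) - L⁻¹ • u := by rw [hz]; abel
    have e1 : ⟪P b, z - b⟫ = -(L⁻¹ * ⟪P b, u⟫) := by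
      rw [hzb, inner_neg_right, real_inner_smul_right]
    have e2 : ‖z - b‖ ^ 2 = L⁻¹ ^ 2 * ‖u‖ ^ 2 := by
      rw [hzb, norm_neg, norm_smul]
      simp [Real.norm_eq_abs, abs_of_pos (inv_pos.2 hL), mul_pow]
    have e3 : ℓf a (z - a) = ⟪P a, b - a⟫ - L⁻¹ * ⟪P a, u⟫ := by
      rw [← hPinner, hza, inner_sub_right, real_inner_smul_right]
    have e4 : ⟪P b, u⟫ - ⟪P a, u⟫ = ‖u‖ ^ 2 := by
      rw [← inner_sub_left, ← hu, real_inner_self_eq_norm_sq]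
    have hLinv : L * L⁻¹ = 1 := mul_inv_cancel₀ (ne_of_gt hL)
    rw [e3] at h1
    rw [e1, e2] at h2
    have hfin : L / 2 * (L⁻¹ ^ 2 * ‖u‖ ^ 2) - L⁻¹ * ‖u‖ ^ 2 = -(1 / (2 * L) * ‖u‖ ^ 2) := by
      field_simp
      ring
    have e4' : L⁻¹ * (⟪P b, u⟫ - ⟪P a, u⟫) = L⁻¹ * ‖u‖ ^ 2 := by rw [e4]
    linarith [h1, h2, e4', hfin]
  have hlip : LipschitzWith L.toNNReal P := by
    apply LipschitzWith.of_dist_le_mul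
    intro x y
    rw [dist_eq_norm, dist_eq_norm]
    have h1 := coco x y
    have h2 := coco y x
    have hnorm : ‖P x - P y‖ = ‖P y - P x‖ := norm_sub_rev _ _
    rw [hnorm] at h2
    have hxy : (x - y) = -(y - x) := by abel
    have hadd : ⟪P y - P x, y - x⟫ ≥ 1 / L * ‖P y - P x‖ ^ 2 := by
      rw [inner_sub_left]
      have e5 : ⟪P y, x - y⟫ = -⟪P y, y - x⟫ := by rw [hxy, inner_neg_right]
      have hhalf : 1 / (2 * L) + 1 / (2 * L) = 1 / L := by
        rw [← add_div]
        rw [div_eq_div_iff (by positivity) (by positivity)]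
        ring
      have hhalf2 : 1 / (2 * L) * ‖P y - P x‖ ^ 2 + 1 / (2 * L) * ‖P y - P x‖ ^ 2
          = 1 / L * ‖P y - P x‖ ^ 2 := by rw [← add_mul, hhalf]
      linarith [h1, h2, e5, hhalf2]
    have hcs : ⟪P y - P x, y - x⟫ ≤ ‖P y - P x‖ * ‖y - x‖ := real_inner_le_norm _ _
    have hL' : (L.toNNReal : ℝ) = L := Real.coe_toNNReal _ hL.le
    rw [hL']
    rcases eq_or_lt_of_le (norm_nonneg (P y - P x)) with hz | hz
    · rw [norm_sub_rev, ← hz]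
      positivity
    · have hle : 1 / L * ‖P y - P x‖ ^ 2 ≤ ‖P y - P x‖ * ‖y - x‖ := le_trans hadd hcs
      have hmul := mul_le_mul_of_nonneg_left hle hL.le
      have hXX : L * (1 / L * ‖P y - P x‖ ^ 2) = ‖P y - P x‖ ^ 2 := by field_simp
      rw [hXX] at hmul
      have hfin : ‖P y - P x‖ ≤ L * ‖y - x‖ := by nlinarith [hz, hmul]
      rw [norm_sub_rev (P x), norm_sub_rev x]
      exact hfin
  exact ⟨P, hgrad, hlip⟩

end C11

section Env
variable {n : ℕ} {φ : EuclideanSpace ℝ (Fin n) → ℝ}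

theorem convEnv_bddAbove (v : EuclideanSpace ℝ (Fin n)) :
    BddAbove {y : ℝ | ∃ g : EuclideanSpace ℝ (Fin n) → ℝ,
      ConvexOn ℝ Set.univ g ∧ (∀ w, g w ≤ φ w) ∧ y = g v} := by
  refine ⟨φ v, ?_⟩
  rintro y ⟨g, _, hgm, rfl⟩
  exact hgm v

theorem le_convEnv {g : EuclideanSpace ℝ (Fin n) → ℝ} (hg : ConvexOn ℝ Set.univ g)
    (hgm : ∀ w, g w ≤ φ w) (v : EuclideanSpace ℝ (Fin n)) : g v ≤ convEnv φ v :=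
  le_csSup (convEnv_bddAbove v) ⟨g, hg, hgm, rfl⟩

theorem convEnv_le
    (hmin : ∃ g : EuclideanSpace ℝ (Fin n) → ℝ, ConvexOn ℝ Set.univ g ∧ ∀ w, g w ≤ φ w)
    (v : EuclideanSpace ℝ (Fin n)) : convEnv φ v ≤ φ v := by
  obtain ⟨g₀, hg₀, hg₀m⟩ := hmin
  have hmem : g₀ v ∈ {y : ℝ | ∃ g : EuclideanSpace ℝ (Fin n) → ℝ,
      ConvexOn ℝ Set.univ g ∧ (∀ w, g w ≤ φ w) ∧ y = g v} := ⟨g₀, hg₀, hg₀m, rfl⟩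
  apply csSup_le ⟨_, hmem⟩
  rintro y ⟨g, _, hgm, rfl⟩
  exact hgm v

theorem convEnv_convexOn
    (hmin : ∃ g : EuclideanSpace ℝ (Fin n) → ℝ, ConvexOn ℝ Set.univ g ∧ ∀ w, g w ≤ φ w) :
    ConvexOn ℝ Set.univ (convEnv φ) := by
  obtain ⟨g₀, hg₀, hg₀m⟩ := hmin
  refine ⟨convex_univ, ?_⟩
  intro x _ y _ a b ha hb hab
  have hmem : g₀ (a • x + b • y) ∈ {z : ℝ | ∃ g : EuclideanSpace ℝ (Fin n) → ℝ,
      ConvexOn ℝ Set.univ g ∧ (∀ w, g w ≤ φ w) ∧ z = g (a • x + b • y)} :=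
    ⟨g₀, hg₀, hg₀m, rfl⟩
  apply csSup_le ⟨_, hmem⟩
  rintro z ⟨g, hg, hgm, rfl⟩
  calc g (a • x + b • y) ≤ a • g x + b • g y :=
        hg.2 (Set.mem_univ x) (Set.mem_univ y) ha hb hab
    _ ≤ a • convEnv φ x + b • convEnv φ y := by
        simp only [smul_eq_mul]
        have h1 : g x ≤ convEnv φ x := le_convEnv hg hgm x
        have h2 : g y ≤ convEnv φ y := le_convEnv hg hgm y
        have := mul_le_mul_of_nonneg_left h1 ha
        have := mul_le_mul_of_nonneg_left h2 hb
        linarith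

theorem convexOn_translate {g : EuclideanSpace ℝ (Fin n) → ℝ}
    (hg : ConvexOn ℝ Set.univ g) (d : EuclideanSpace ℝ (Fin n)) :
    ConvexOn ℝ Set.univ (fun v => g (v + d)) := by
  refine ⟨convex_univ, ?_⟩
  intro x _ y _ a b ha hb hab
  have hpt : (a • x + b • y) + d = a • (x + d) + b • (y + d) := by
    have : a • (x + d) + b • (y + d) = a • x + b • y + (a + b) • d := by module
    rw [this, hab, one_smul]
  simp only
  rw [hpt]
  exact hg.2 (Set.mem_univ _) (Set.mem_univ _) ha hb hab

end Env

set_option maxHeartbeats 2000000 in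
/-- toric model of `C^{1,1}` regularity of the equilibrium metric.
If `Δ ⊂ ℝⁿ` is the convex hull of a finite set of integer points with nonempty interior,
`φ_Δ(v) = log ∑_{α ∈ Δ∩ℤⁿ} e^{⟨α,v⟩}`, `χ` smooth with compact support and `φ = φ_Δ + χ`,
then the convex envelope `φ_e` of `φ` is convex on `ℝⁿ`, differentiable everywhere, and its
gradient map is Lipschitz continuous on `ℝⁿ`. -/
theorem equilibrium_C11_toric (n : ℕ) (hn : 1 ≤ n)
    (S : Finset (EuclideanSpace ℝ (Fin n)))
    (hS : ∀ α ∈ S, ∀ i, ∃ m : ℤ, α i = (m : ℝ))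
    (Δ : Set (EuclideanSpace ℝ (Fin n)))
    (hΔ : Δ = convexHull ℝ (S : Set (EuclideanSpace ℝ (Fin n))))
    (hΔint : (interior Δ).Nonempty)
    (A : Finset (EuclideanSpace ℝ (Fin n)))
    (hA : (A : Set (EuclideanSpace ℝ (Fin n))) = Δ ∩ {v | ∀ i, ∃ m : ℤ, v i = (m : ℝ)})
    (φΔ χ φ : EuclideanSpace ℝ (Fin n) → ℝ)
    (hφΔ : ∀ v, φΔ v = Real.log (∑ α ∈ A, Real.exp ⟪α, v⟫))
    (hχ : ContDiff ℝ (⊤ : ℕ∞) χ) (hχc : HasCompactSupport χ)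
    (hφ : φ = φΔ + χ) :
    ConvexOn ℝ Set.univ (convEnv φ) ∧
    (∀ v, DifferentiableAt ℝ (convEnv φ) v) ∧
    ∃ K : NNReal, LipschitzWith K (gradient (convEnv φ)) := by
  classical
  -- A is nonempty
  obtain ⟨v₀, hv₀⟩ := hΔint
  have hv₀Δ : v₀ ∈ Δ := interior_subset hv₀
  have hSne : (S : Set (EuclideanSpace ℝ (Fin n))).Nonempty := by
    by_contra hS0
    rw [Set.not_nonempty_iff_eq_empty] at hS0
    rw [hΔ, hS0, convexHull_empty] at hv₀Δ
    exact hv₀Δ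
  obtain ⟨α₀, hα₀S⟩ := hSne
  have hα₀A : α₀ ∈ A := by
    rw [← Finset.mem_coe, hA]
    refine ⟨?_, hS α₀ hα₀S⟩
    rw [hΔ]
    exact subset_convexHull ℝ _ hα₀S
  -- bound on lattice points of A
  set R : ℝ := A.sup' ⟨α₀, hα₀A⟩ (fun α => ‖α‖) with hRdef
  have hR : ∀ α ∈ A, ‖α‖ ≤ R := fun α hα => Finset.le_sup' _ hα
  have hR0 : 0 ≤ R := le_trans (norm_nonneg α₀) (hR α₀ hα₀A)
  clear_value R
  -- Lipschitz bound for the derivative of χ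
  have hχ' : ContDiff ℝ (⊤ : ℕ∞) (fderiv ℝ χ) := hχ.fderiv_right (by simp)
  obtain ⟨K, hK⟩ :=
    ContDiff.lipschitzWith_of_hasCompactSupport (hχc.fderiv (𝕜 := ℝ)) hχ' (by simp)
  have hχdiff : Differentiable ℝ χ := hχ.differentiable (by simp)
  have hquadχ : ∀ w d : EuclideanSpace ℝ (Fin n),
      |χ (w + d) - χ w - fderiv ℝ χ w d| ≤ (K : ℝ) * ‖d‖ ^ 2 := by
    intro w d
    set s := Metric.closedBall w ‖d‖ with hsdef
    have hders : ∀ y ∈ s, HasFDerivWithinAt (fun y => χ y - fderiv ℝ χ w y)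
        (fderiv ℝ χ y - fderiv ℝ χ w) s y := fun y _ =>
      ((hχdiff y).hasFDerivAt.sub (fderiv ℝ χ w).hasFDerivAt).hasFDerivWithinAt
    have hbound : ∀ y ∈ s, ‖fderiv ℝ χ y - fderiv ℝ χ w‖ ≤ (K : ℝ) * ‖d‖ := by
      intro y hy
      have h1 := hK.dist_le_mul y w
      rw [dist_eq_norm, dist_eq_norm] at h1
      have h2 : ‖y - w‖ ≤ ‖d‖ := by
        rw [← dist_eq_norm]
        exact Metric.mem_closedBall.mp hy
      calc ‖fderiv ℝ χ y - fderiv ℝ χ w‖ ≤ (K : ℝ) * ‖y - w‖ := h1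
        _ ≤ (K : ℝ) * ‖d‖ := mul_le_mul_of_nonneg_left h2 K.coe_nonneg
    have hmem1 : w ∈ s := Metric.mem_closedBall_self (norm_nonneg d)
    have hmem2 : w + d ∈ s := by
      rw [hsdef, Metric.mem_closedBall, dist_eq_norm, add_sub_cancel_left]
    have hmv := Convex.norm_image_sub_le_of_norm_hasFDerivWithin_le hders hbound
      (convex_closedBall w ‖d‖) hmem1 hmem2
    have hD : fderiv ℝ χ w (w + d) - fderiv ℝ χ w w = fderiv ℝ χ w d := by
      rw [← map_sub, add_sub_cancel_left]
    have he1 : χ (w + d) - fderiv ℝ χ w (w + d) - (χ w - fderiv ℝ χ w w)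
        = χ (w + d) - χ w - fderiv ℝ χ w d := by linarith [hD]
    rw [he1] at hmv
    have he2 : ‖w + d - w‖ = ‖d‖ := by rw [add_sub_cancel_left]
    rw [he2] at hmv
    rw [← Real.norm_eq_abs]
    calc ‖χ (w + d) - χ w - fderiv ℝ χ w d‖ ≤ (K : ℝ) * ‖d‖ * ‖d‖ := hmv
      _ = (K : ℝ) * ‖d‖ ^ 2 := by ring
  have hmidχ : ∀ w d : EuclideanSpace ℝ (Fin n),
      χ (w + d) + χ (w - d) - 2 * χ w ≤ 2 * (K : ℝ) * ‖d‖ ^ 2 := by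
    intro w d
    have h1 := hquadχ w d
    have h2 := hquadχ w (-d)
    rw [← sub_eq_add_neg, ContinuousLinearMap.map_neg, norm_neg] at h2
    have h1' := (abs_le.mp h1).2
    have h2' := (abs_le.mp h2).2
    linarith
  -- log-sum-exp midpoint inequality
  set Z : EuclideanSpace ℝ (Fin n) → ℝ := fun v => ∑ α ∈ A, Real.exp ⟪α, v⟫ with hZdef
  have hφZ : ∀ v, φΔ v = Real.log (Z v) := hφΔ
  have hZpos : ∀ v, 0 < Z v :=
    fun v => Finset.sum_pos (fun α _ => Real.exp_pos _) ⟨α₀, hα₀A⟩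
  have hZsingle : ∀ v, Real.exp ⟪α₀, v⟫ ≤ Z v :=
    fun v => Finset.single_le_sum (f := fun α => Real.exp ⟪α, v⟫)
      (fun α _ => (Real.exp_pos _).le) hα₀A
  clear_value Z
  have hmidZ : ∀ w d : EuclideanSpace ℝ (Fin n),
      Z (w + d) + Z (w - d) ≤ 2 * Real.exp (R ^ 2 * ‖d‖ ^ 2 / 2) * Z w := by
    intro w d
    have hterm : ∀ α ∈ A, Real.exp ⟪α, w + d⟫ + Real.exp ⟪α, w - d⟫
        ≤ 2 * Real.exp (R ^ 2 * ‖d‖ ^ 2 / 2) * Real.exp ⟪α, w⟫ := by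
      intro α hα
      rw [inner_add_right, inner_sub_right, sub_eq_add_neg, Real.exp_add, Real.exp_add]
      have hcosh1 : Real.cosh ⟪α, d⟫ ≤ Real.exp (R ^ 2 * ‖d‖ ^ 2 / 2) := by
        calc Real.cosh ⟪α, d⟫ ≤ Real.exp (⟪α, d⟫ ^ 2 / 2) := Real.cosh_le_exp_half_sq _
          _ ≤ Real.exp (R ^ 2 * ‖d‖ ^ 2 / 2) := by
              apply Real.exp_le_exp.2
              have hcs := abs_real_inner_le_norm α d
              have hna : ‖α‖ ≤ R := hR α hα
              nlinarith [mul_self_le_mul_self (abs_nonneg ⟪α, d⟫) hcs,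
                mul_self_le_mul_self (norm_nonneg α) hna,
                sq_abs ⟪α, d⟫, sq_nonneg ‖d‖, norm_nonneg d, norm_nonneg α]
      have hc := Real.cosh_eq ⟪α, d⟫
      have hm1 := mul_le_mul_of_nonneg_left hcosh1 (Real.exp_pos ⟪α, w⟫).le
      have hc2 : Real.exp ⟪α, w⟫ * Real.cosh ⟪α, d⟫
          = (Real.exp ⟪α, w⟫ * Real.exp ⟪α, d⟫
            + Real.exp ⟪α, w⟫ * Real.exp (-⟪α, d⟫)) / 2 := by rw [hc]; ring
      linarith [hm1, hc2]
    calc Z (w + d) + Z (w - d)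
        = ∑ α ∈ A, (Real.exp ⟪α, w + d⟫ + Real.exp ⟪α, w - d⟫) := by
          rw [hZdef]
          rw [← Finset.sum_add_distrib]
      _ ≤ ∑ α ∈ A, 2 * Real.exp (R ^ 2 * ‖d‖ ^ 2 / 2) * Real.exp ⟪α, w⟫ :=
          Finset.sum_le_sum hterm
      _ = 2 * Real.exp (R ^ 2 * ‖d‖ ^ 2 / 2) * Z w := by
          rw [hZdef, ← Finset.mul_sum]
  have hmidφΔ : ∀ w d : EuclideanSpace ℝ (Fin n),
      φΔ (w + d) + φΔ (w - d) ≤ 2 * φΔ w + R ^ 2 * ‖d‖ ^ 2 := by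
    intro w d
    rw [hφZ, hφZ, hφZ]
    have hE : (0:ℝ) < Real.exp (R ^ 2 * ‖d‖ ^ 2 / 2) := Real.exp_pos _
    have hAM : Z (w + d) * Z (w - d)
        ≤ (Real.exp (R ^ 2 * ‖d‖ ^ 2 / 2) * Z w) ^ 2 := by
      nlinarith [hmidZ w d, hZpos (w + d), hZpos (w - d), hZpos w, hE,
        sq_nonneg (Z (w + d) - Z (w - d))]
    calc Real.log (Z (w + d)) + Real.log (Z (w - d))
        = Real.log (Z (w + d) * Z (w - d)) :=
          (Real.log_mul (ne_of_gt (hZpos _)) (ne_of_gt (hZpos _))).symm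
      _ ≤ Real.log ((Real.exp (R ^ 2 * ‖d‖ ^ 2 / 2) * Z w) ^ 2) :=
          Real.log_le_log (mul_pos (hZpos _) (hZpos _)) hAM
      _ = 2 * Real.log (Real.exp (R ^ 2 * ‖d‖ ^ 2 / 2) * Z w) := by
          rw [Real.log_pow]
          norm_num
      _ = 2 * (R ^ 2 * ‖d‖ ^ 2 / 2 + Real.log (Z w)) := by
          rw [Real.log_mul (ne_of_gt hE) (ne_of_gt (hZpos w)), Real.log_exp]
      _ = 2 * Real.log (Z w) + R ^ 2 * ‖d‖ ^ 2 := by ring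
  -- the semiconcavity constant
  set L : ℝ := R ^ 2 + 2 * (K : ℝ) + 1 with hLdef
  have hL : 0 < L := by positivity
  clear_value L
  have hmidφ : ∀ w d : EuclideanSpace ℝ (Fin n),
      φ (w + d) + φ (w - d) ≤ 2 * φ w + L * ‖d‖ ^ 2 := by
    intro w d
    rw [hφ]
    simp only [Pi.add_apply]
    have h1 := hmidφΔ w d
    have h2 := hmidχ w d
    have h3 : (R ^ 2 + 2 * (K : ℝ)) * ‖d‖ ^ 2 ≤ L * ‖d‖ ^ 2 := by
      apply mul_le_mul_of_nonneg_right _ (sq_nonneg _)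
      rw [hLdef]
      linarith
    nlinarith [h1, h2, h3]
  -- affine minorant of φ
  obtain ⟨C, hC⟩ := hχc.exists_bound_of_continuous hχ.continuous
  set g₀ : EuclideanSpace ℝ (Fin n) → ℝ := fun v => ⟪α₀, v⟫ - C with hg₀def
  have hg₀conv : ConvexOn ℝ Set.univ g₀ := by
    refine ⟨convex_univ, ?_⟩
    intro x _ y _ a b ha hb hab
    simp only [hg₀def, smul_eq_mul]
    rw [inner_add_right, real_inner_smul_right, real_inner_smul_right]
    have hCC : a * C + b * C = C := by rw [← add_mul, hab, one_mul]
    linarith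
  have hg₀min : ∀ v, g₀ v ≤ φ v := by
    intro v
    rw [hφ]
    simp only [Pi.add_apply, hg₀def]
    have h1 : ⟪α₀, v⟫ ≤ φΔ v := by
      rw [hφZ]
      calc ⟪α₀, v⟫ = Real.log (Real.exp ⟪α₀, v⟫) := (Real.log_exp _).symm
        _ ≤ Real.log (Z v) := Real.log_le_log (Real.exp_pos _) (hZsingle v)
    have h2 : -C ≤ χ v := by
      have := hC v
      rw [Real.norm_eq_abs] at this
      linarith [(abs_le.mp this).1]
    linarith
  have hminex : ∃ g : EuclideanSpace ℝ (Fin n) → ℝ,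
      ConvexOn ℝ Set.univ g ∧ ∀ w, g w ≤ φ w := ⟨g₀, hg₀conv, hg₀min⟩
  -- the envelope is convex and continuous
  have hfconv : ConvexOn ℝ Set.univ (convEnv φ) := convEnv_convexOn hminex
  have hfcont : Continuous (convEnv φ) := by
    rw [← continuousOn_univ]
    exact hfconv.continuousOn isOpen_univ
  -- midpoint semiconcavity of the envelope
  have hmidf : ∀ w d : EuclideanSpace ℝ (Fin n),
      convEnv φ (w + d) + convEnv φ (w - d) ≤ 2 * convEnv φ w + L * ‖d‖ ^ 2 := by
    intro w d
    set h : EuclideanSpace ℝ (Fin n) → ℝ := fun v =>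
      (1/2) * convEnv φ (v + d) + (1/2) * convEnv φ (v - d) - L / 2 * ‖d‖ ^ 2 with hhdef
    have hhconv : ConvexOn ℝ Set.univ h := by
      refine ⟨convex_univ, ?_⟩
      intro x _ y _ a b ha hb hab
      have e1 : (a • x + b • y) + d = a • (x + d) + b • (y + d) := by
        have h' : a • (x + d) + b • (y + d) = a • x + b • y + (a + b) • d := by module
        rw [h', hab, one_smul]
      have e2 : (a • x + b • y) - d = a • (x - d) + b • (y - d) := by
        have h' : a • (x - d) + b • (y - d) = a • x + b • y - (a + b) • d := by module
        rw [h', hab, one_smul]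
      have c1 := hfconv.2 (Set.mem_univ (x + d)) (Set.mem_univ (y + d)) ha hb hab
      have c2 := hfconv.2 (Set.mem_univ (x - d)) (Set.mem_univ (y - d)) ha hb hab
      simp only [smul_eq_mul] at c1 c2 ⊢
      simp only [hhdef]
      rw [e1, e2]
      have hCC : a * (L / 2 * ‖d‖ ^ 2) + b * (L / 2 * ‖d‖ ^ 2) = L / 2 * ‖d‖ ^ 2 := by
        rw [← add_mul, hab, one_mul]
      nlinarith [c1, c2, hCC, ha, hb]
    have hhmin : ∀ v, h v ≤ φ v := by
      intro v
      have h1 : convEnv φ (v + d) ≤ φ (v + d) := convEnv_le hminex _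
      have h2 : convEnv φ (v - d) ≤ φ (v - d) := convEnv_le hminex _
      have h3 := hmidφ v d
      simp only [hhdef]
      linarith
    have := le_convEnv hhconv hhmin w
    simp only [hhdef] at this
    linarith
  -- convexity of L/2 ‖x‖² - envelope
  have hψconv : ConvexOn ℝ Set.univ (fun x => L / 2 * ‖x‖ ^ 2 - convEnv φ x) := by
    apply convexOn_of_midpoint'
    · exact (continuous_const.mul ((continuous_norm).pow 2)).sub hfcont
    · intro x y
      try dsimp only
      set w : EuclideanSpace ℝ (Fin n) := (1/2 : ℝ) • x + (1/2 : ℝ) • y with hwdef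
      set d : EuclideanSpace ℝ (Fin n) := (1/2 : ℝ) • x - (1/2 : ℝ) • y with hddef
      have hwd1 : w + d = x := by rw [hwdef, hddef]; module
      have hwd2 : w - d = y := by rw [hwdef, hddef]; module
      clear_value w d
      have hpar : ‖x‖ ^ 2 + ‖y‖ ^ 2 = 2 * ‖w‖ ^ 2 + 2 * ‖d‖ ^ 2 := by
        rw [← hwd1, ← hwd2, norm_add_sq_real, norm_sub_sq_real]
        ring
      have h3 := hmidf w d
      rw [hwd1, hwd2] at h3
      have hpar2 : L / 2 * ‖x‖ ^ 2 + L / 2 * ‖y‖ ^ 2 = L * ‖w‖ ^ 2 + L * ‖d‖ ^ 2 := by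
        linear_combination (L / 2) * hpar
      linarith [h3, hpar2]
  -- conclude via the C^{1,1} lemma
  obtain ⟨P, hgrad, hlip⟩ := c11_of_convex_semiconcave hL hfconv hfcont hψconv
  refine ⟨hfconv, fun v => (hgrad v).hasFDerivAt.differentiableAt, L.toNNReal, ?_⟩
  have hPg : gradient (convEnv φ) = P := funext fun v => (hgrad v).gradient
  rw [hPg]
  exact hlip
end

section
/- Let g : ℝ^n → ℝ be convex and suppose there is a constant C ≥ 0 such that g(x+h) + g(x−h) − 2g(x) ≤ C‖h‖² for all x, h ∈ ℝ^n. Then g is differentiable at every point of ℝ^n and the gradient map ∇g : ℝ^n → ℝ^n is Lipschitz continuous with Lipschitz constant at most C. (This is the step converting the two-sided second-difference bound into C^{1,1}-regularity in the Bedford–Taylor-type argument.) -/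
/-!
A continuous convex function has a subgradient `φ x` at every point (Hahn–Banach applied to its
open strict epigraph). The second-difference bound at `x` squeezes `g (x + h) - g x - φ x h`
between `0` and `C ‖h‖²`, so `φ x` is the derivative, and applying the bound at the midpoints
`x + h / 2, x + h / 4, …` improves the constant to `C / 2`. Comparing the two first-order
bounds at `y - s • d` and `x + s • d`, where `d = ∇g y - ∇g x` and `s = 1 / C` (or `s → ∞` if
`C = 0`), gives `‖d‖² ≤ C ⟪d, y - x⟫`, hence `‖d‖ ≤ C ‖y - x‖` by Cauchy–Schwarz.
-/

open Set Filter Topology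
open scoped RealInnerProductSpace

section NormedSpace

variable {E : Type*} [NormedAddCommGroup E] [NormedSpace ℝ E]

theorem ConvexOn.exists_subgradient {g : E → ℝ} (hg : ConvexOn ℝ univ g) (hcont : Continuous g)
    (x : E) : ∃ φ : StrongDual ℝ E, ∀ y, g x + φ (y - x) ≤ g y := by
  have hopen : IsOpen {q : E × ℝ | q.1 ∈ univ ∧ g q.1 < q.2} := by
    simpa only [mem_univ, true_and] using isOpen_lt (by fun_prop) continuous_snd
  obtain ⟨ℓ, hℓ⟩ := geometric_hahn_banach_open_point hg.convex_strict_epigraph hopen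
    (x := (x, g x)) (by simp)
  set a := ℓ (0, 1)
  have hℓ_apply (y : E) (t : ℝ) : ℓ (y, t) = ℓ (y, 0) + t * a := by
    have : (y, t) = (y, 0) + t • ((0 : E), (1 : ℝ)) := by simp
    rw [this, map_add, map_smul, smul_eq_mul]
  have hsep (y : E) (t : ℝ) (ht : g y < t) : ℓ (y, t) < ℓ (x, g x) := hℓ _ ⟨mem_univ _, ht⟩
  have ha : a < 0 := by
    have := hsep x (g x + 1) (by linarith)
    rw [hℓ_apply x (g x + 1), hℓ_apply x (g x)] at this
    linarith
  have hsupport (y : E) : ℓ (y, 0) + g y * a ≤ ℓ (x, 0) + g x * a := by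
    refine le_of_forall_pos_lt_add fun ε hε => ?_
    have := hsep y (g y + ε / -a) (by linarith [div_pos hε (neg_pos.2 ha)])
    rw [hℓ_apply, hℓ_apply x, add_mul, div_neg, neg_mul, div_mul_cancel₀ ε ha.ne] at this
    linarith
  refine ⟨(-a)⁻¹ • ℓ.comp (.inl ℝ E ℝ), fun y => ?_⟩
  simp only [smul_apply, ContinuousLinearMap.comp_apply,
    ContinuousLinearMap.inl_apply, smul_eq_mul]
  rw [← sub_zero (0 : ℝ), ← Prod.mk_sub_mk, map_sub, inv_mul_eq_div, ← le_sub_iff_add_le',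
    div_le_iff₀ (neg_pos.2 ha)]
  linarith [hsupport y]

theorem sub_sub_le_of_subgradient {g : E → ℝ} {φ : StrongDual ℝ E} {x : E} {C : ℝ}
    (hφ : ∀ y, g x + φ (y - x) ≤ g y)
    (hbd : ∀ h, g (x + h) + g (x - h) - 2 * g x ≤ C * ‖h‖ ^ 2) (h : E) :
    g (x + h) - g x - φ h ≤ C * ‖h‖ ^ 2 := by
  have := hφ (x - h)
  rw [sub_sub_cancel_left, map_neg] at this
  linarith [hbd h]

theorem hasFDerivAt_of_subgradient {g : E → ℝ} {φ : StrongDual ℝ E} {x : E} {C : ℝ}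
    (hφ : ∀ y, g x + φ (y - x) ≤ g y)
    (hbd : ∀ h, g (x + h) + g (x - h) - 2 * g x ≤ C * ‖h‖ ^ 2) :
    HasFDerivAt g φ x := by
  rw [hasFDerivAt_iff_isLittleO_nhds_zero]
  refine (Asymptotics.IsBigO.of_bound C (Eventually.of_forall fun h => ?_)).trans_isLittleO
    (Asymptotics.isLittleO_norm_pow_id one_lt_two)
  have := hφ (x + h)
  rw [add_sub_cancel_left] at this
  rw [Real.norm_of_nonneg (by linarith), norm_pow, norm_norm]
  exact sub_sub_le_of_subgradient hφ hbd h

theorem le_half_mul_norm_sq_of_le_two_mul_half {e : E → ℝ} {C : ℝ}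
    (hle : ∀ h, e h ≤ C * ‖h‖ ^ 2)
    (hmid : ∀ h, e h ≤ 2 * e ((2 : ℝ)⁻¹ • h) + C / 4 * ‖h‖ ^ 2) (h : E) :
    e h ≤ C / 2 * ‖h‖ ^ 2 := by
  have hiter (m : ℕ) : ∀ h, e h ≤ C / 2 * (1 + (2⁻¹ : ℝ) ^ m) * ‖h‖ ^ 2 := by
    induction m with
    | zero => intro h; linear_combination hle h
    | succ m ih =>
      intro h
      have hhalf := ih ((2 : ℝ)⁻¹ • h)
      rw [norm_smul, mul_pow, norm_inv, Real.norm_two] at hhalf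
      linear_combination hmid h + 2 * hhalf
  have hlim : Tendsto (fun m : ℕ => C / 2 * (1 + (2⁻¹ : ℝ) ^ m) * ‖h‖ ^ 2) atTop
      (𝓝 (C / 2 * (1 + 0) * ‖h‖ ^ 2)) :=
    (((tendsto_pow_atTop_nhds_zero_of_lt_one (by norm_num) (by norm_num)).const_add 1).const_mul
      (C / 2)).mul_const _
  rw [add_zero, mul_one] at hlim
  exact ge_of_tendsto' hlim fun m => hiter m h

theorem sub_sub_le_half_of_subgradient {g : E → ℝ} {φ : StrongDual ℝ E} {x : E} {C : ℝ}
    (hφ : ∀ y, g x + φ (y - x) ≤ g y)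
    (hbd : ∀ x h : E, g (x + h) + g (x - h) - 2 * g x ≤ C * ‖h‖ ^ 2) (h : E) :
    g (x + h) - g x - φ h ≤ C / 2 * ‖h‖ ^ 2 := by
  refine le_half_mul_norm_sq_of_le_two_mul_half (e := fun h => g (x + h) - g x - φ h)
    (sub_sub_le_of_subgradient hφ (hbd x)) (fun h => ?_) h
  have hmid := hbd (x + (2 : ℝ)⁻¹ • h) ((2 : ℝ)⁻¹ • h)
  have hx : x + (2 : ℝ)⁻¹ • h + (2 : ℝ)⁻¹ • h = x + h := by
    rw [add_assoc, ← add_smul]; norm_num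
  rw [hx, add_sub_cancel_right, norm_smul, mul_pow, norm_inv, Real.norm_two] at hmid
  simp only [map_smul, smul_eq_mul]
  linear_combination hmid

end NormedSpace

theorem le_mul_of_forall_two_mul_sub_mul_sq_mul_le {a b C : ℝ} (hC : 0 ≤ C)
    (h : ∀ s, (2 * s - C * s ^ 2) * a ≤ b) : a ≤ C * b := by
  rcases hC.eq_or_lt with rfl | hC
  · have hb : 0 ≤ b := by simpa using h 0
    by_contra! ha
    rw [zero_mul] at ha
    have hexp : (2 * (b / a + 1) - 0 * (b / a + 1) ^ 2) * a = 2 * b + 2 * a := by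
      field_simp
      ring
    linarith [h (b / a + 1)]
  · have hinv := h C⁻¹
    rwa [sq, ← mul_assoc, mul_inv_cancel₀ hC.ne', two_mul, one_mul, add_sub_cancel_right,
      inv_mul_le_iff₀ hC] at hinv

section InnerProductSpace

variable {F : Type*} [NormedAddCommGroup F] [InnerProductSpace ℝ F]

theorem two_mul_sub_mul_sq_mul_norm_sq_le_inner {g : F → ℝ} {p : F → F} {C : ℝ}
    (hlow : ∀ x y, g x + ⟪p x, y - x⟫ ≤ g y)
    (hup : ∀ x y, g y ≤ g x + ⟪p x, y - x⟫ + C / 2 * ‖y - x‖ ^ 2) (x y : F) (s : ℝ) :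
    (2 * s - C * s ^ 2) * ‖p y - p x‖ ^ 2 ≤ ⟪p y - p x, y - x⟫ := by
  set d := p y - p x with hd
  have h₁ := hlow x (y - s • d)
  have h₂ := hup y (y - s • d)
  have h₃ := hlow y (x + s • d)
  have h₄ := hup x (x + s • d)
  rw [sub_right_comm, inner_sub_right, real_inner_smul_right] at h₁
  rw [sub_sub_cancel_left, inner_neg_right, real_inner_smul_right, norm_neg, norm_smul, mul_pow,
    Real.norm_eq_abs, sq_abs] at h₂
  rw [add_sub_right_comm, inner_add_right, real_inner_smul_right, ← neg_sub y x,
    inner_neg_right] at h₃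
  rw [add_sub_cancel_left, real_inner_smul_right, norm_smul, mul_pow, Real.norm_eq_abs,
    sq_abs] at h₄
  have hdd : ⟪p y, d⟫ - ⟪p x, d⟫ = ‖d‖ ^ 2 := by
    rw [← inner_sub_left, ← hd, real_inner_self_eq_norm_sq]
  have hsub : ⟪p y, y - x⟫ - ⟪p x, y - x⟫ = ⟪d, y - x⟫ := by
    rw [← inner_sub_left]
  linear_combination h₁ + h₂ + h₃ + h₄ - 2 * s * hdd + hsub

theorem lipschitzWith_of_first_order_bounds {g : F → ℝ} {p : F → F} {C : ℝ} (hC : 0 ≤ C)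
    (hlow : ∀ x y, g x + ⟪p x, y - x⟫ ≤ g y)
    (hup : ∀ x y, g y ≤ g x + ⟪p x, y - x⟫ + C / 2 * ‖y - x‖ ^ 2) :
    LipschitzWith C.toNNReal p := by
  refine LipschitzWith.of_dist_le_mul fun x y => ?_
  rw [Real.coe_toNNReal C hC, dist_comm, dist_comm x, dist_eq_norm, dist_eq_norm]
  have hco : ‖p y - p x‖ ^ 2 ≤ C * ⟪p y - p x, y - x⟫ :=
    le_mul_of_forall_two_mul_sub_mul_sq_mul_le hC
      (two_mul_sub_mul_sq_mul_norm_sq_le_inner hlow hup x y)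
  have hcs := real_inner_le_norm (p y - p x) (y - x)
  rcases (norm_nonneg (p y - p x)).eq_or_lt with hzero | hpos
  · rw [← hzero]; positivity
  · refine le_of_mul_le_mul_left ?_ hpos
    nlinarith

end InnerProductSpace

/-- a convex function `g : ℝⁿ → ℝ` satisfying the two-sided second-difference
bound `g(x+h) + g(x−h) − 2g(x) ≤ C‖h‖²` is differentiable everywhere, and its gradient map
is Lipschitz continuous with Lipschitz constant at most `C`. -/
theorem convex_second_difference_C11 (n : ℕ)
    (g : EuclideanSpace ℝ (Fin n) → ℝ)
    (hg : ConvexOn ℝ Set.univ g)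
    (C : ℝ) (hC : 0 ≤ C)
    (hbd : ∀ x h : EuclideanSpace ℝ (Fin n),
      g (x + h) + g (x - h) - 2 * g x ≤ C * ‖h‖ ^ 2) :
    (∀ x, DifferentiableAt ℝ g x) ∧
    LipschitzWith C.toNNReal (gradient g) := by
  have hcont : Continuous g := continuousOn_univ.1 (hg.continuousOn isOpen_univ)
  choose φ hφ using hg.exists_subgradient hcont
  have hgrad (x) : HasGradientAt g ((InnerProductSpace.toDual ℝ _).symm (φ x)) x :=
    hasFDerivAt_iff_hasGradientAt.1 (hasFDerivAt_of_subgradient (hφ x) (hbd x))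
  have hinner (x y) : ⟪gradient g x, y⟫ = φ x y := by
    rw [(hgrad x).gradient, InnerProductSpace.toDual_symm_apply]
  refine ⟨fun x => (hgrad x).differentiableAt,
    lipschitzWith_of_first_order_bounds (g := g) hC (fun x y => ?_) (fun x y => ?_)⟩
  · rw [hinner]
    exact hφ x y
  · rw [hinner]
    have hquad := sub_sub_le_half_of_subgradient (hφ x) hbd (y - x)
    rw [add_sub_cancel] at hquad
    linarith
end

section
/- Let Ω ⊆ ℝ^m be open, let φ : Ω → ℝ be of class C², let u : Ω → ℝ be differentiable with locally Lipschitz gradient map ∇u : Ω → ℝ^m, assume u ≤ φ on Ω, and set D = { x ∈ Ω : u(x) = φ(x) }. Then: (i) ∇u(x) = ∇φ(x) for every x ∈ D; and (ii) for Lebesgue-almost every x ∈ D, the map ∇u is differentiable at x and its derivative at x equals the Hessian D²φ(x) of φ at x. In particular the (almost-everywhere defined) second derivatives of u and φ coincide almost everywhere on the contact set D. (This is the local form of part (c) of the regularity theorem: (dd^cφ_e)^n = (dd^cφ)^n almost everywhere on the contact set.) -/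
/-!
On the contact set `D` the function `φ - u ≥ 0` attains a local minimum, so `∇u = ∇φ` on `D`.
The map `∇u - ∇φ` is locally Lipschitz and vanishes on `D`. At a Lebesgue density point `x` of
`D`, every nearby `y` has a point of `D` within distance `o(|y - x|)`, so this Lipschitz map is
`o(|y - x|)` near `x`: it is differentiable at `x` with derivative `0`, and therefore `∇u` has
the derivative `D²φ(x)` of `∇φ`. Almost every point of `D` is a density point (Besicovitch).
-/

open MeasureTheory Metric Filter Set Asymptotics Module
open scoped Topology NNReal

def IsDensityPoint {E : Type*} [PseudoMetricSpace E] [MeasurableSpace E] (μ : Measure E)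
    (s : Set E) (x : E) : Prop :=
  Tendsto (fun r => μ (s ∩ closedBall x r) / μ (closedBall x r)) (𝓝[>] 0) (𝓝 1)

theorem IsDensityPoint.inter_of_mem_nhds {E : Type*} [PseudoMetricSpace E] [MeasurableSpace E]
    {μ : Measure E} {s t : Set E} {x : E} (h : IsDensityPoint μ s x) (ht : t ∈ 𝓝 x) :
    IsDensityPoint μ (s ∩ t) x := by
  obtain ⟨ε, hε, hεt⟩ := nhds_basis_closedBall.mem_iff.1 ht
  refine h.congr' ?_
  filter_upwards [Ioo_mem_nhdsGT hε] with r hr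
  rw [inter_assoc, inter_eq_right.2 ((closedBall_subset_closedBall hr.2.le).trans hεt)]

section AddHaar

variable {E : Type*} [NormedAddCommGroup E] [NormedSpace ℝ E] [MeasurableSpace E]
  [BorelSpace E] [FiniteDimensional ℝ E] {μ : Measure E} [μ.IsAddHaarMeasure] {s : Set E}
  {x : E}

theorem measure_inter_closedBall_div_le_of_disjoint {y : E} {r ρ : ℝ} (hr : 0 < r)
    (hρ : 0 ≤ ρ) (hsub : closedBall y ρ ⊆ closedBall x r) (hdisj : Disjoint s (closedBall y ρ)) :
    μ (s ∩ closedBall x r) / μ (closedBall x r) ≤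
      1 - ENNReal.ofReal ((ρ / r) ^ finrank ℝ E) := by
  have hball :
      μ (closedBall y ρ) = ENNReal.ofReal ((ρ / r) ^ finrank ℝ E) * μ (closedBall x r) := by
    rw [Measure.addHaar_closedBall_center μ x r,
      ← Measure.addHaar_closedBall_mul μ y (by positivity) hr.le, div_mul_cancel₀ ρ hr.ne']
  refine ENNReal.div_le_of_le_mul ?_
  calc μ (s ∩ closedBall x r) ≤ μ (closedBall x r \ closedBall y ρ) :=
        measure_mono fun z hz => ⟨hz.2, hdisj.notMem_of_mem_left hz.1⟩
    _ = μ (closedBall x r) - μ (closedBall y ρ) :=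
        measure_sdiff hsub measurableSet_closedBall.nullMeasurableSet measure_closedBall_lt_top.ne
    _ = (1 - ENNReal.ofReal ((ρ / r) ^ finrank ℝ E)) * μ (closedBall x r) := by
        rw [hball, ENNReal.sub_mul fun _ _ => measure_closedBall_lt_top.ne, one_mul]

/-- If `infDist y s > c |y - x|`, the ball of radius `c |y - x|` about `y` misses `s` and fills
the proportion `(c / (1 + c)) ^ dim E` of the ball of radius `(1 + c) |y - x|` about `x`. -/
theorem IsDensityPoint.infDist_isLittleO (h : IsDensityPoint μ s x) (hx : x ∈ s) :
    (fun y => infDist y s) =o[𝓝 x] (fun y => y - x) := by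
  refine isLittleO_iff.2 fun c hc => ?_
  set κ := ENNReal.ofReal ((c / (1 + c)) ^ finrank ℝ E)
  have hκ : 1 - κ < 1 := ENNReal.sub_lt_self ENNReal.one_ne_top one_ne_zero (by positivity)
  obtain ⟨δ, hδ, hδr⟩ := Metric.eventually_nhds_iff.1 <|
    eventually_nhdsWithin_iff.1 (h.eventually (eventually_gt_nhds hκ))
  filter_upwards [ball_mem_nhds x (show 0 < δ / (1 + c) by positivity)] with y hy
  rw [Real.norm_of_nonneg infDist_nonneg, ← dist_eq_norm]
  by_contra! hlt
  rcases eq_or_ne y x with rfl | hyx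
  · simp [infDist_zero_of_mem hx] at hlt
  have hd : 0 < dist y x := dist_pos.2 hyx
  have hratio := measure_inter_closedBall_div_le_of_disjoint (μ := μ) (s := s)
    (r := (1 + c) * dist y x) (by positivity) (by positivity)
    (closedBall_subset_closedBall' (by linarith)) (disjoint_closedBall_of_lt_infDist hlt).symm
  rw [mul_div_mul_right _ _ hd.ne'] at hratio
  refine (hδr ?_ (by positivity : 0 < (1 + c) * dist y x)).not_ge hratio
  rw [Real.dist_0_eq_abs, abs_of_pos (by positivity), ← lt_div_iff₀' (by positivity)]
  exact hy

end AddHaar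

theorem LipschitzOnWith.norm_le_mul_infDist {E F : Type*} [PseudoMetricSpace E]
    [SeminormedAddCommGroup F] {g : E → F} {K : ℝ≥0} {s t : Set E} {y : E}
    (hg : LipschitzOnWith K g t) (hst : s ⊆ t) (hs : s.Nonempty) (hgs : EqOn g 0 s)
    (hy : y ∈ t) : ‖g y‖ ≤ K * infDist y s := by
  have hbound : ∀ z ∈ s, ‖g y‖ ≤ K * dist y z := fun z hz => by
    simpa [hgs hz] using hg.dist_le_mul y hy z (hst hz)
  rcases eq_or_ne K 0 with rfl | hK
  · obtain ⟨z, hz⟩ := hs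
    simpa using hbound z hz
  have hK : (0 : ℝ) < K := by positivity
  rw [← div_le_iff₀' hK, le_infDist hs]
  exact fun z hz => (div_le_iff₀' hK).2 (hbound z hz)

section Differentiability

variable {E F : Type*} [NormedAddCommGroup E] [NormedSpace ℝ E] [MeasurableSpace E]
  [BorelSpace E] [FiniteDimensional ℝ E] {μ : Measure E} [μ.IsAddHaarMeasure]
  [NormedAddCommGroup F] [NormedSpace ℝ F] {s : Set E} {x : E}

theorem LipschitzOnWith.hasFDerivAt_zero_of_isDensityPoint {g : E → F} {K : ℝ≥0} {t : Set E}
    (hg : LipschitzOnWith K g t) (ht : t ∈ 𝓝 x) (hs : IsDensityPoint μ s x) (hx : x ∈ s)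
    (hgs : EqOn g 0 s) : HasFDerivAt g (0 : E →L[ℝ] F) x := by
  have hxt : x ∈ s ∩ t := ⟨hx, mem_of_mem_nhds ht⟩
  have hbound : g =O[𝓝 x] fun y => infDist y (s ∩ t) := IsBigO.of_bound K <| by
    filter_upwards [ht] with y hy
    rw [Real.norm_of_nonneg infDist_nonneg]
    exact hg.norm_le_mul_infDist inter_subset_right ⟨x, hxt⟩ (hgs.mono inter_subset_left) hy
  rw [hasFDerivAt_iff_isLittleO]
  simpa [hgs hx] using hbound.trans_isLittleO ((hs.inter_of_mem_nhds ht).infDist_isLittleO hxt)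

theorem hasFDerivAt_of_eqOn_of_isDensityPoint {f₁ f₂ : E → F} {f₂' : E →L[ℝ] F}
    {t₁ t₂ : Set E} {K₁ K₂ : ℝ≥0} (hf₁ : LipschitzOnWith K₁ f₁ t₁) (ht₁ : t₁ ∈ 𝓝 x)
    (hf₂ : LipschitzOnWith K₂ f₂ t₂) (ht₂ : t₂ ∈ 𝓝 x) (hf₂' : HasFDerivAt f₂ f₂' x)
    (hs : IsDensityPoint μ s x) (hx : x ∈ s) (hf : EqOn f₁ f₂ s) : HasFDerivAt f₁ f₂' x := by
  have hlip : LipschitzOnWith (K₁ + K₂) (f₁ - f₂) (t₁ ∩ t₂) :=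
    (hf₁.mono inter_subset_left).sub (hf₂.mono inter_subset_right)
  have hsub : HasFDerivAt (f₁ - f₂) 0 x :=
    hlip.hasFDerivAt_zero_of_isDensityPoint (inter_mem ht₁ ht₂) hs hx fun y hy =>
      sub_eq_zero.2 (hf hy)
  simpa using hsub.add hf₂'

end Differentiability

section Gradient

variable {F : Type*} [NormedAddCommGroup F] [InnerProductSpace ℝ F] [CompleteSpace F]
  {f g : F → ℝ} {x : F}

theorem gradient_eq_of_eventuallyLE_of_eq (hf : DifferentiableAt ℝ f x)
    (hg : DifferentiableAt ℝ g x) (hle : f ≤ᶠ[𝓝 x] g) (heq : f x = g x) :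
    gradient f x = gradient g x := by
  have hmin : IsLocalMin (g - f) x := by
    filter_upwards [hle] with y hy
    simp only [Pi.sub_apply, heq, sub_self, sub_nonneg, hy]
  have hfderiv := hmin.hasFDerivAt_eq_zero (hg.hasFDerivAt.sub hf.hasFDerivAt)
  rw [gradient, gradient, sub_eq_zero.1 hfderiv]

theorem ContDiffAt.gradient_right {m n : WithTop ℕ∞} (hf : ContDiffAt ℝ n f x)
    (hmn : m + 1 ≤ n) : ContDiffAt ℝ m (gradient f) x :=
  (InnerProductSpace.toDual ℝ F).symm.contDiff.contDiffAt.comp x (hf.fderiv_right hmn)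

end Gradient

/-- local form of part (c) of the regularity theorem. If `φ` is `C²` on an open
set `Ω ⊆ ℝᵐ`, `u` is differentiable on `Ω` with locally Lipschitz gradient, `u ≤ φ` on `Ω`,
and `D = {x ∈ Ω : u x = φ x}` is the contact set, then `∇u = ∇φ` on `D`, and for
Lebesgue-almost every point of `D` the gradient map `∇u` is differentiable with derivative
equal to the Hessian of `φ`. -/
theorem gradient_eq_and_hessian_ae_on_contact_set (m : ℕ)
    (Ω : Set (EuclideanSpace ℝ (Fin m))) (hΩ : IsOpen Ω)
    (φ u : EuclideanSpace ℝ (Fin m) → ℝ)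
    (hφ : ContDiffOn ℝ 2 φ Ω)
    (hu : ∀ x ∈ Ω, DifferentiableAt ℝ u x)
    (hu' : ∀ x ∈ Ω, ∃ s ∈ nhds x, ∃ K : NNReal, LipschitzOnWith K (gradient u) s)
    (hle : ∀ x ∈ Ω, u x ≤ φ x) :
    (∀ x ∈ Ω, u x = φ x → gradient u x = gradient φ x) ∧
    (∀ᵐ x ∂volume, x ∈ Ω → u x = φ x →
      DifferentiableAt ℝ (gradient u) x ∧
      fderiv ℝ (gradient u) x = fderiv ℝ (gradient φ) x) := by
  have hφx : ∀ x ∈ Ω, ContDiffAt ℝ 2 φ x := fun x hx => hφ.contDiffAt (hΩ.mem_nhds hx)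
  have hgrad : ∀ x ∈ Ω, u x = φ x → gradient u x = gradient φ x := fun x hx hux =>
    gradient_eq_of_eventuallyLE_of_eq (hu x hx) ((hφx x hx).differentiableAt two_ne_zero)
      (eventually_of_mem (hΩ.mem_nhds hx) hle) hux
  refine ⟨hgrad, ?_⟩
  filter_upwards [ae_imp_of_ae_restrict
    (Besicovitch.ae_tendsto_measure_inter_div volume {x | x ∈ Ω ∧ u x = φ x})]
    with x hdensity hx hux
  have hφ' : ContDiffAt ℝ 1 (gradient φ) x := (hφx x hx).gradient_right le_rfl
  obtain ⟨t₁, ht₁, K₁, hu'x⟩ := hu' x hx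
  obtain ⟨K₂, t₂, ht₂, hφ'x⟩ := hφ'.exists_lipschitzOnWith
  have hderiv : HasFDerivAt (gradient u) (fderiv ℝ (gradient φ) x) x :=
    hasFDerivAt_of_eqOn_of_isDensityPoint hu'x ht₁ hφ'x ht₂
      (hφ'.differentiableAt one_ne_zero).hasFDerivAt (hdensity ⟨hx, hux⟩) ⟨hx, hux⟩
      fun y hy => hgrad y hy.1 hy.2
  exact ⟨hderiv.differentiableAt, hderiv.fderiv⟩
end
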